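/- For the D1Q2 lattice Boltzmann scheme for linear advection with 0 < c \le \lambda, relaxation s \in (0,2], when s > 2/(1 + c/\lambda) the operator norm of the one-step scheme operator in the weighted \ell^1 norm equals s(1 + c/\lambda) - 1. -/

import Mathlib

open scoped BigOperators

/-- Collision phase of the D1Q2 scheme for linear advection. -/
noncomputable def d1q2Collide {N : ℕ} (lam c s : ℝ)
    (F : (ZMod N → ℝ) × (ZMod N → ℝ)) : (ZMod N → ℝ) × (ZMod N → ℝ) :=
  (fun k => ((F.1 k + F.2 k) + ((1 - s) * (lam * (F.1 k - F.2 k)) + s * c * (F.1 k + F.2 k)) / lam) / 2,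
   fun k => ((F.1 k + F.2 k) - ((1 - s) * (lam * (F.1 k - F.2 k)) + s * c * (F.1 k + F.2 k)) / lam) / 2)

/-- One full time step of the D1Q2 scheme on a periodic lattice of `N` cells. -/
noncomputable def d1q2Step {N : ℕ} (lam c s : ℝ)
    (F : (ZMod N → ℝ) × (ZMod N → ℝ)) : (ZMod N → ℝ) × (ZMod N → ℝ) :=
  (fun k => (d1q2Collide lam c s F).1 (k - 1),
   fun k => (d1q2Collide lam c s F).2 (k + 1))

/-! Cellwise, the collision maps the differences `(F⁰ - G⁰, F¹ - G¹)` by the matrix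
`[[1 - a, b], [a, 1 - b]]` with `a = s(1 - c/λ)/2` and `b = s(1 + c/λ)/2`, and streaming only
permutes the cells of each population, so the `ℓ¹` operator norm is the largest absolute column
sum of this matrix. Since `0 ≤ a ≤ b`, the first column sums to `max(1, 2a - 1) ≤ 2b - 1` in
absolute value, while the second sums to exactly `2b - 1 = s(1 + c/λ) - 1` once `b ≥ 1`; this
value is attained by data that differ only in the second population. -/

open Finset

noncomputable def l1Dist {ι : Type*} [Fintype ι] (F G : (ι → ℝ) × (ι → ℝ)) : ℝ :=
  ∑ k, (|F.1 k - G.1 k| + |F.2 k - G.2 k|)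

theorem abs_mul_add_mul_add_abs_le {p q u v K : ℝ} (hcol₁ : |p| + |u| ≤ K)
    (hcol₂ : |q| + |v| ≤ K) (x y : ℝ) :
    |p * x + q * y| + |u * x + v * y| ≤ K * (|x| + |y|) :=
  calc |p * x + q * y| + |u * x + v * y|
      ≤ (|p| * |x| + |q| * |y|) + (|u| * |x| + |v| * |y|) := by
        simp only [← abs_mul]
        exact add_le_add (abs_add_le _ _) (abs_add_le _ _)
    _ = (|p| + |u|) * |x| + (|q| + |v|) * |y| := by ring
    _ ≤ K * |x| + K * |y| := by gcongr
    _ = K * (|x| + |y|) := by ring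

section D1Q2

variable {N : ℕ} {lam c s : ℝ}

theorem d1q2Collide_fst_sub (hlam : lam ≠ 0) (F G : (ZMod N → ℝ) × (ZMod N → ℝ))
    (k : ZMod N) :
    (d1q2Collide lam c s F).1 k - (d1q2Collide lam c s G).1 k =
      (1 - s * (1 - c / lam) / 2) * (F.1 k - G.1 k) + s * (1 + c / lam) / 2 * (F.2 k - G.2 k) := by
  simp only [d1q2Collide]
  field_simp
  ring

theorem d1q2Collide_snd_sub (hlam : lam ≠ 0) (F G : (ZMod N → ℝ) × (ZMod N → ℝ))
    (k : ZMod N) :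
    (d1q2Collide lam c s F).2 k - (d1q2Collide lam c s G).2 k =
      s * (1 - c / lam) / 2 * (F.1 k - G.1 k) + (1 - s * (1 + c / lam) / 2) * (F.2 k - G.2 k) := by
  simp only [d1q2Collide]
  field_simp
  ring

variable [NeZero N]

theorem l1Dist_d1q2Step (F G : (ZMod N → ℝ) × (ZMod N → ℝ)) :
    l1Dist (d1q2Step lam c s F) (d1q2Step lam c s G) =
      l1Dist (d1q2Collide lam c s F) (d1q2Collide lam c s G) := by
  simp only [l1Dist, d1q2Step, sum_add_distrib]
  congr 1
  · exact Equiv.sum_comp (Equiv.subRight (1 : ZMod N))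
      fun k => |(d1q2Collide lam c s F).1 k - (d1q2Collide lam c s G).1 k|
  · exact Equiv.sum_comp (Equiv.addRight (1 : ZMod N))
      fun k => |(d1q2Collide lam c s F).2 k - (d1q2Collide lam c s G).2 k|

theorem l1Dist_d1q2Collide_le (hlam : 0 < lam) (hc : 0 ≤ c) (hcl : c ≤ lam)
    (hs : 2 ≤ s * (1 + c / lam)) (F G : (ZMod N → ℝ) × (ZMod N → ℝ)) :
    l1Dist (d1q2Collide lam c s F) (d1q2Collide lam c s G) ≤
      (s * (1 + c / lam) - 1) * l1Dist F G := by
  have hr₀ : 0 ≤ c / lam := div_nonneg hc hlam.le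
  have hr₁ : c / lam ≤ 1 := (div_le_one hlam).mpr hcl
  have hs₀ : 0 ≤ s := by nlinarith
  have ha : 0 ≤ s * (1 - c / lam) / 2 := 
    div_nonneg (mul_nonneg hs₀ (sub_nonneg.mpr hr₁)) zero_le_two
  have hab : s * (1 - c / lam) / 2 ≤ s * (1 + c / lam) / 2 := by nlinarith
  have hcol₁ : |1 - s * (1 - c / lam) / 2| + |s * (1 - c / lam) / 2| ≤
      s * (1 + c / lam) - 1 := by
    rw [abs_of_nonneg ha]
    cases abs_cases (1 - s * (1 - c / lam) / 2) <;> linarith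
  have hcol₂ : |s * (1 + c / lam) / 2| + |1 - s * (1 + c / lam) / 2| ≤
      s * (1 + c / lam) - 1 := by
    rw [abs_of_nonneg (by linarith), abs_of_nonpos (by linarith)]
    linarith
  rw [l1Dist, l1Dist, mul_sum]
  gcongr with k
  rw [d1q2Collide_fst_sub hlam.ne', d1q2Collide_snd_sub hlam.ne']
  exact abs_mul_add_mul_add_abs_le hcol₁ hcol₂ _ _

theorem l1Dist_d1q2Collide_of_fst_eq (hlam : lam ≠ 0) (hs : 2 ≤ s * (1 + c / lam))
    {F G : (ZMod N → ℝ) × (ZMod N → ℝ)} (hFG : F.1 = G.1) :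
    l1Dist (d1q2Collide lam c s F) (d1q2Collide lam c s G) =
      (s * (1 + c / lam) - 1) * l1Dist F G := by
  rw [l1Dist, l1Dist, mul_sum]
  refine sum_congr rfl fun k _ => ?_
  rw [d1q2Collide_fst_sub hlam, d1q2Collide_snd_sub hlam, hFG, sub_self]
  simp only [mul_zero, zero_add, abs_zero, abs_mul]
  rw [abs_of_nonneg (by linarith : 0 ≤ s * (1 + c / lam) / 2),
    abs_of_nonpos (by linarith : 1 - s * (1 + c / lam) / 2 ≤ 0)]
  ring

end D1Q2

theorem d1q2_operator_norm_l1_general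
    (N : ℕ) [NeZero N] (lam c s Δx : ℝ)
    (hΔx : 0 < Δx) (hc : 0 < c) (hcl : c ≤ lam)
    (hs : 2 / (1 + c / lam) < s) :
    IsLeast {C : ℝ | 0 ≤ C ∧
        ∀ F G : (ZMod N → ℝ) × (ZMod N → ℝ),
          Δx * ∑ k : ZMod N,
              (|(d1q2Step lam c s F).1 k - (d1q2Step lam c s G).1 k| +
               |(d1q2Step lam c s F).2 k - (d1q2Step lam c s G).2 k|)
            ≤ C * (Δx * ∑ k : ZMod N, (|F.1 k - G.1 k| + |F.2 k - G.2 k|))}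
      (s * (1 + c / lam) - 1) := by
  have hlam : 0 < lam := hc.trans_le hcl
  have hsr : 2 < s * (1 + c / lam) := (div_lt_iff₀ (by positivity)).mp hs
  refine ⟨⟨by linarith, fun F G => ?_⟩, fun C ⟨_, hC⟩ => ?_⟩
  · change Δx * l1Dist (d1q2Step lam c s F) (d1q2Step lam c s G) ≤ _ * (Δx * l1Dist F G)
    rw [l1Dist_d1q2Step, mul_left_comm]
    exact mul_le_mul_of_nonneg_left
      (l1Dist_d1q2Collide_le hlam hc.le hcl hsr.le F G) hΔx.le
  · let F : (ZMod N → ℝ) × (ZMod N → ℝ) := (0, 1)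
    have hF : 0 < l1Dist F 0 := by simpa [F, l1Dist] using NeZero.pos N
    have h := hC F 0
    change Δx * l1Dist (d1q2Step lam c s F) (d1q2Step lam c s 0) ≤ C * (Δx * l1Dist F 0) at h
    rw [l1Dist_d1q2Step, l1Dist_d1q2Collide_of_fst_eq hlam.ne' hsr.le (F := F) (G := 0) rfl,
      mul_left_comm] at h
    exact le_of_mul_le_mul_right h (mul_pos hΔx hF)

/-- for the D1Q2 scheme for linear advection with `0 < c ≤ λ`,
`s ∈ (0,2]` and `s > 2/(1 + c/λ)`, the operator norm of the one-step scheme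
operator in the weighted `ℓ¹` norm (i.e. its least Lipschitz constant) equals
`s(1 + c/λ) - 1`. -/
theorem d1q2_operator_norm_l1
    (N : ℕ) [NeZero N] (lam c s Δx : ℝ)
    (hΔx : 0 < Δx) (hc : 0 < c) (hcl : c ≤ lam)
    (hs0 : 0 < s) (hs2 : s ≤ 2)
    (hs : 2 / (1 + c / lam) < s) :
    IsLeast {C : ℝ | 0 ≤ C ∧
        ∀ F G : (ZMod N → ℝ) × (ZMod N → ℝ),
          Δx * ∑ k : ZMod N,
              (|(d1q2Step lam c s F).1 k - (d1q2Step lam c s G).1 k| +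
               |(d1q2Step lam c s F).2 k - (d1q2Step lam c s G).2 k|)
            ≤ C * (Δx * ∑ k : ZMod N, (|F.1 k - G.1 k| + |F.2 k - G.2 k|))}
      (s * (1 + c / lam) - 1) :=
  d1q2_operator_norm_l1_general N lam c s Δx hΔx hc hcl hs
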